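/- arXiv:1702.07142 — 4 statements merged into one kernel-verified Lean document; each statement's English description precedes it below -/
import Mathlib

section
/- Let r : G → H be a homomorphism of abelian groups and let l be a prime number. Suppose that H has no l-torsion (i.e. every h ∈ H with l·h = 0 satisfies h = 0), and that the induced map G/lG → H/lH is injective (equivalently: whenever r(g) is divisible by l in H, then g is divisible by l in G). Then the kernel of r is contained in the intersection ⋂_{j≥0} l^j·G; that is, every element of ker r is divisible by l^j in G for every j ≥ 0. -/
/-- Néron–Hrushovski lemma: if `H` has no `l`-torsion and the induced map
`G/lG → H/lH` is injective (i.e. whenever `r g` is divisible by `l` in `H`,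
then `g` is divisible by `l` in `G`), then every element of `ker r` is
divisible by `l^j` in `G` for every `j`. -/
theorem neron_hrushovski {G H : Type*} [AddCommGroup G] [AddCommGroup H]
    (r : G →+ H) (l : ℕ) (hl : l.Prime)
    (hHtor : ∀ h : H, l • h = 0 → h = 0)
    (hinj : ∀ g : G, (∃ h : H, r g = l • h) → ∃ g' : G, g = l • g') :
    ∀ g : G, r g = 0 → ∀ j : ℕ, ∃ g' : G, g = l ^ j • g' := by
  have key : ∀ j : ℕ, ∀ g : G, r g = 0 → ∃ g' : G, g = l ^ j • g' := by
    intro j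
    induction j with
    | zero => intro g _; exact ⟨g, by simp⟩
    | succ j ih =>
      intro g hg
      obtain ⟨g', hg'⟩ := hinj g ⟨0, by simp [hg]⟩
      have hrg' : r g' = 0 := by
        apply hHtor
        rw [← map_nsmul, ← hg', hg]
      obtain ⟨g'', hg''⟩ := ih g' hrg'
      refine ⟨g'', ?_⟩
      rw [hg', hg'', pow_succ, mul_comm, mul_smul]
  exact fun g hg j => key j g hg
end

section
/- Let p be a prime number and let G be an abelian group in which every element has order a power of p. Suppose that for every n ≥ 0 the set {x ∈ G : p^n·x = 0} is finite, and suppose that G is infinite. Then ⋂_{ℓ≥0} p^ℓ·G ≠ 0; that is, there exists a nonzero element x ∈ G such that for every ℓ ≥ 0 there is y ∈ G with x = p^ℓ·y. -/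
/-- An infinite abelian `p`-primary torsion group with finite `p^n`-torsion
layers contains a nonzero infinitely `p`-divisible element. -/
theorem exists_infinitely_divisible_of_infinite {G : Type*} [AddCommGroup G]
    (p : ℕ) (hp : p.Prime)
    (htor : ∀ x : G, ∃ n : ℕ, p ^ n • x = 0)
    (hfin : ∀ n : ℕ, {x : G | p ^ n • x = 0}.Finite)
    (hinf : Infinite G) :
    ∃ x : G, x ≠ 0 ∧ ∀ ℓ : ℕ, ∃ y : G, x = p ^ ℓ • y := by
  -- Step 1: the image of multiplication by p^ℓ is infinite.
  have hrange : ∀ ℓ : ℕ, (Set.range fun g : G => p ^ ℓ • g).Infinite := by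
    intro ℓ
    by_contra h
    rw [Set.not_infinite] at h
    have hunion : (⋃ c ∈ Set.range (fun g : G => p ^ ℓ • g),
        {g : G | p ^ ℓ • g = c}).Finite := by
      refine h.biUnion ?_
      rintro c ⟨g0, hg0⟩
      have hsub : {g : G | p ^ ℓ • g = c} ⊆ (fun x => x + g0) '' {x : G | p ^ ℓ • x = 0} := by
        intro g hg
        simp only [Set.mem_setOf_eq] at hg0 hg
        refine ⟨g - g0, ?_, sub_add_cancel g g0⟩
        simp only [Set.mem_setOf_eq]
        rw [smul_sub, hg, hg0, sub_self]
      exact ((hfin ℓ).image _).subset hsub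
    have huniv : (Set.univ : Set G).Finite := by
      refine hunion.subset ?_
      intro g _
      exact Set.mem_biUnion ⟨g, rfl⟩ rfl
    exact Set.infinite_univ huniv
  -- Step 2: for each ℓ there is a nonzero element of order p in the image of p^ℓ.
  have key : ∀ ℓ : ℕ, ∃ x : G, x ≠ 0 ∧ p ^ 1 • x = 0 ∧ ∃ y : G, x = p ^ ℓ • y := by
    intro ℓ
    obtain ⟨z, hz⟩ := ((hrange ℓ).diff (Set.finite_singleton 0)).nonempty
    obtain ⟨⟨y, hy⟩, hz0⟩ := hz
    simp only [Set.mem_singleton_iff] at hz0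
    classical
    have hzt := htor z
    set n := Nat.find hzt with hn
    have hpn : p ^ n • z = 0 := Nat.find_spec hzt
    have hnpos : 0 < n := by
      rcases Nat.eq_zero_or_pos n with h0 | h
      · exfalso; apply hz0; have := hpn; rw [h0] at this; simpa using this
      · exact h
    refine ⟨p ^ (n - 1) • z, ?_, ?_, ⟨p ^ (n - 1) • y, ?_⟩⟩
    · exact Nat.find_min hzt (Nat.sub_lt hnpos one_pos)
    · rw [smul_smul, ← pow_add]
      have : 1 + (n - 1) = n := by omega
      rw [this, hpn]
    · rw [← hy, smul_comm]
  -- Step 3: pigeonhole over the finite p-torsion layer.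
  choose f hf0 hfp hfy using key
  have : Finite {x : G // p ^ 1 • x = 0} := (hfin 1).to_subtype
  obtain ⟨⟨x, hx⟩, hfib'⟩ :=
    Finite.exists_infinite_fiber (fun ℓ : ℕ => (⟨f ℓ, hfp ℓ⟩ : {x : G // p ^ 1 • x = 0}))
  have hfib : ((fun ℓ : ℕ => (⟨f ℓ, hfp ℓ⟩ : {x : G // p ^ 1 • x = 0})) ⁻¹'
      {⟨x, hx⟩}).Infinite := Set.infinite_coe_iff.mp hfib'
  have hmem : ∀ {ℓ : ℕ}, ℓ ∈ (fun ℓ : ℕ => (⟨f ℓ, hfp ℓ⟩ : {x : G // p ^ 1 • x = 0})) ⁻¹'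
      {⟨x, hx⟩} → f ℓ = x := by
    intro ℓ hℓ
    simpa [Subtype.ext_iff] using hℓ
  obtain ⟨ℓ0, hℓ0⟩ := hfib.nonempty
  refine ⟨x, by rw [← hmem hℓ0]; exact hf0 ℓ0, ?_⟩
  intro ℓ
  obtain ⟨ℓ', hℓ', hlt⟩ := hfib.exists_gt ℓ
  obtain ⟨y, hy⟩ := hfy ℓ'
  refine ⟨p ^ (ℓ' - ℓ) • y, ?_⟩
  have he : ℓ + (ℓ' - ℓ) = ℓ' := by omega
  rw [← hmem hℓ', hy, smul_smul, ← pow_add, he]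
end

section
/- Let M be a finitely generated abelian group and let ψ : M → M be an injective group endomorphism. Suppose there exists a monic polynomial P ∈ ℤ[X] with P(ψ) = 0 as an endomorphism of M, such that no complex root of P is an algebraic unit (i.e. for every z ∈ ℂ with P(z) = 0, it is not the case that both z and z⁻¹ are integral over ℤ). Then the subgroup ⋂_{j≥0} ψ^j(M) is finite. -/
/-!
Because `ψ` is injective it maps `N = ⋂ j, ψ^j(M)` bijectively onto itself, so its restriction
is an automorphism `f` of the finitely generated abelian group `N` with `P(f) = 0`. Every
endomorphism of a finitely generated `ℤ`-module is integral over `ℤ`, so an eigenvalue `z` of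
`f ⊗ ℂ` would be an algebraic integer with `z⁻¹` (an eigenvalue of `f⁻¹ ⊗ ℂ`) one as well, and a
root of `P`. Hence `ℂ ⊗ N = 0`; as `ℂ` is flat over `ℤ`, `N` is torsion and therefore finite.
-/

open Polynomial TensorProduct

theorem Set.bijOn_iInter_range_iterate {α : Type*} {f : α → α} (hf : Function.Injective f) :
    Set.BijOn f (⋂ j : ℕ, Set.range f^[j]) (⋂ j : ℕ, Set.range f^[j]) := by
  refine ⟨fun x hx => Set.mem_iInter.mpr fun j => ?_, hf.injOn, fun x hx => ?_⟩
  · obtain ⟨y, rfl⟩ := Set.mem_iInter.mp hx j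
    exact ⟨f y, (Function.Commute.self_iterate f j y).symm⟩
  · obtain ⟨y, rfl⟩ := Set.mem_iInter.mp hx 1
    refine ⟨y, Set.mem_iInter.mpr fun j => ?_, rfl⟩
    obtain ⟨w, hw⟩ := Set.mem_iInter.mp hx (j + 1)
    exact ⟨w, hf (by rwa [← Function.iterate_succ_apply' f j w])⟩

theorem Polynomial.aeval_addMonoidEndRingEquivInt {M : Type*} [AddCommGroup M]
    (ψ : AddMonoid.End M) (P : ℤ[X]) :
    aeval (addMonoidEndRingEquivInt M ψ) P = addMonoidEndRingEquivInt M (aeval ψ P) := by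
  simp [aeval_eq_sum_range]

theorem Module.End.aeval_restrict_apply {R M : Type*} [CommRing R] [AddCommGroup M] [Module R M]
    {f : Module.End R M} {p : Submodule R M} (hf : ∀ x ∈ p, f x ∈ p) (q : R[X]) (x : p) :
    (aeval (f.restrict hf) q x : M) = aeval f q x := by
  simp [aeval_eq_sum_range, Module.End.pow_restrict _ hf, LinearMap.restrict_apply]

namespace Module.End

section Integral

variable {R K V : Type*} [CommRing R] [Field K] [Algebra R K] [AddCommGroup V] [Module K V]
  [Module R V] [IsScalarTower R K V] {f : End K V} {μ : K}

theorem HasEigenvalue.aeval_eq_zero (hμ : f.HasEigenvalue μ) {p : R[X]} (hp : aeval f p = 0) :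
    aeval μ p = 0 := by
  obtain ⟨v, hv⟩ := hμ.exists_hasEigenvector
  have := aeval_apply_of_hasEigenvector (p := p.map (algebraMap R K)) hv
  rw [aeval_map_algebraMap, hp, LinearMap.zero_apply, eq_comm, smul_eq_zero,
    eval_map_algebraMap] at this
  exact this.resolve_right hv.2

theorem HasEigenvalue.isIntegral (hμ : f.HasEigenvalue μ) (hf : IsIntegral R f) :
    IsIntegral R μ :=
  let ⟨p, hmonic, hp⟩ := hf
  ⟨p, hmonic, by rw [← aeval_def] at hp ⊢; exact hμ.aeval_eq_zero hp⟩

end Integral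

section Inverse

variable {K V : Type*} [Field K] [AddCommGroup V] [Module K V] {f g : End K V} {μ : K}

theorem HasEigenvalue.ne_zero_of_mul_eq_one (hgf : g * f = 1) (hμ : f.HasEigenvalue μ) :
    μ ≠ 0 := by
  rintro rfl
  obtain ⟨v, hv⟩ := hμ.exists_hasEigenvector
  have : v = g (f v) := by rw [← mul_apply, hgf, one_apply]
  rw [hv.apply_eq_smul, zero_smul, map_zero] at this
  exact hv.2 this

theorem HasEigenvalue.inv_of_mul_eq_one (hgf : g * f = 1) (hμ : f.HasEigenvalue μ) :
    g.HasEigenvalue μ⁻¹ := by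
  obtain ⟨v, hv⟩ := hμ.exists_hasEigenvector
  have hgv : g v = μ⁻¹ • v := calc
    g v = μ⁻¹ • μ • g v := (inv_smul_smul₀ (hμ.ne_zero_of_mul_eq_one hgf) _).symm
    _ = μ⁻¹ • v := by rw [← LinearMap.map_smul, ← hv.apply_eq_smul, ← mul_apply, hgf, one_apply]
  exact hasEigenvalue_of_hasEigenvector ⟨mem_eigenspace_iff.mpr hgv, hv.2⟩

end Inverse

end Module.End

theorem Module.isTorsion_of_subsingleton_tensorProduct {R : Type*} (A : Type*) {M : Type*}
    [CommRing R] [IsDomain R] [AddCommGroup A] [Module R A] [Module.Flat R A] [Nontrivial A]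
    [AddCommGroup M] [Module R M] [Subsingleton (A ⊗[R] M)] : Module.IsTorsion R M := by
  intro x
  by_contra hx
  have hinj : Function.Injective (LinearMap.toSpanSingleton R M x) := by
    refine (injective_iff_map_eq_zero _).mpr fun a ha => ?_
    by_contra ha0
    exact hx ⟨⟨a, mem_nonZeroDivisors_of_ne_zero ha0⟩, ha⟩
  have : Subsingleton A :=
    ((Module.Flat.lTensor_preserves_injective_linearMap _ hinj).comp
      (TensorProduct.rid R A).symm.injective).subsingleton
  exact false_of_nontrivial_of_subsingleton A

theorem finite_of_isUnit_of_aeval_eq_zero_of_no_unit_root {N : Type*} [AddCommGroup N]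
    [Module.Finite ℤ N] {f : Module.End ℤ N} (hf : IsUnit f) {P : ℤ[X]} (hP : aeval f P = 0)
    (hroots : ∀ z : ℂ, aeval z P = 0 → ¬(z ≠ 0 ∧ IsIntegral ℤ z ∧ IsIntegral ℤ z⁻¹)) :
    Finite N := by
  have : Subsingleton (ℂ ⊗[ℤ] N) := by
    by_contra hN
    rw [not_subsingleton_iff_nontrivial] at hN
    let φ := Module.End.baseChangeHom ℤ ℂ N
    obtain ⟨z, hz⟩ := Module.End.exists_eigenvalue (φ f)
    have hgf : φ ↑hf.unit⁻¹ * φ f = 1 := by rw [← map_mul, hf.val_inv_mul, map_one]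
    refine hroots z (hz.aeval_eq_zero (by rw [aeval_algHom_apply, hP, map_zero])) ⟨?_, ?_, ?_⟩
    · exact hz.ne_zero_of_mul_eq_one hgf
    · exact hz.isIntegral ((Algebra.IsIntegral.isIntegral f).map φ)
    · exact (hz.inv_of_mul_eq_one hgf).isIntegral ((Algebra.IsIntegral.isIntegral _).map φ)
  exact Module.finite_of_fg_torsion N (Module.isTorsion_of_subsingleton_tensorProduct ℂ)

theorem finite_iInter_iterate_of_no_unit_root_general {M : Type*} [AddCommGroup M]
    [AddGroup.FG M] (ψ : AddMonoid.End M) (hψ : Function.Injective ψ)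
    (P : Polynomial ℤ)
    (hPψ : Polynomial.aeval ψ P = 0)
    (hroots : ∀ z : ℂ, Polynomial.aeval z P = 0 →
      ¬(z ≠ 0 ∧ IsIntegral ℤ z ∧ IsIntegral ℤ z⁻¹)) :
    (⋂ j : ℕ, Set.range ((⇑ψ)^[j])).Finite := by
  have : Module.Finite ℤ M := Module.Finite.iff_addGroup_fg.mpr ‹_›
  let f := addMonoidEndRingEquivInt M ψ
  let N : Submodule ℤ M := ⨅ j : ℕ, LinearMap.range (f ^ j)
  have hN : (N : Set M) = ⋂ j : ℕ, Set.range ψ^[j] := by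
    simp only [N, Submodule.coe_iInf, LinearMap.coe_range, Module.End.coe_pow]; rfl
  have hbij := Set.bijOn_iInter_range_iterate hψ
  rw [← hN] at hbij ⊢
  have hmaps : ∀ x ∈ N, f x ∈ N := hbij.mapsTo
  have hunit : IsUnit (f.restrict hmaps) := (Module.End.isUnit_iff _).mpr hbij.bijective
  have hP : aeval (f.restrict hmaps) P = 0 := LinearMap.ext fun x => Subtype.ext <| by
    rw [Module.End.aeval_restrict_apply, aeval_addMonoidEndRingEquivInt, hPψ]; rfl
  have : Finite N := finite_of_isUnit_of_aeval_eq_zero_of_no_unit_root hunit hP hroots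
  exact Set.finite_coe_iff.mp this

/-- If an injective endomorphism `ψ` of a finitely generated abelian group
satisfies a monic integer polynomial none of whose complex roots is an
algebraic unit, then `⋂ j, ψ^j(M)` is finite. -/
theorem finite_iInter_iterate_of_no_unit_root {M : Type*} [AddCommGroup M]
    [AddGroup.FG M] (ψ : AddMonoid.End M) (hψ : Function.Injective ψ)
    (P : Polynomial ℤ) (hmonic : P.Monic)
    (hPψ : Polynomial.aeval ψ P = 0)
    (hroots : ∀ z : ℂ, Polynomial.aeval z P = 0 →
      ¬(z ≠ 0 ∧ IsIntegral ℤ z ∧ IsIntegral ℤ z⁻¹)) :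
    (⋂ j : ℕ, Set.range ((⇑ψ)^[j])).Finite :=
  finite_iInter_iterate_of_no_unit_root_general ψ hψ P hPψ hroots
end

section
/- Let p be a prime number, let G be a finitely generated abelian group, and let ψ : G → G be an injective group endomorphism such that ψ(x) ∈ p·G for every x ∈ G. Then the subgroup I := ⋂_{j≥0} ψ^j(G) is finite and every element of I has order prime to p (equivalently, p does not divide the order of I). -/
/-! Every element of `⋂ j, ψ^j(G)` is divisible by `p ^ j` for all `j`. By the Krull intersection
theorem, applied to the finitely generated torsion-free ℤ-module `G ⧸ torsion`, such an element
is torsion, and the torsion subgroup of `G` is finite. If `e` is its exponent and `p ^ k` the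
`p`-part of `e`, then writing `x = p ^ k • y` with `y` torsion gives `(e / p ^ k) • x = e • y = 0`.
-/

theorem Module.eq_zero_of_forall_exists_eq_pow_smul {R M : Type*} [CommRing R] [IsDomain R]
    [IsNoetherianRing R] [AddCommGroup M] [Module R M] [Module.IsTorsionFree R M]
    [Module.Finite R M] {r : R} (hr : ¬IsUnit r) {x : M} (hx : ∀ j : ℕ, ∃ y, x = r ^ j • y) :
    x = 0 := by
  have hI : Ideal.span {r} ≠ ⊤ := by rwa [Ne, Ideal.span_singleton_eq_top]
  rw [← Submodule.mem_bot R, ← (Ideal.span {r}).iInf_pow_smul_eq_bot_of_isTorsionFree hI,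
    Submodule.mem_iInf]
  intro j
  obtain ⟨y, rfl⟩ := hx j
  exact Submodule.smul_mem_smul (Ideal.pow_mem_pow (Ideal.mem_span_singleton_self r) j)
    Submodule.mem_top

theorem AddMonoid.End.exists_iterate_eq_pow_nsmul {M : Type*} [AddMonoid M] {p : ℕ}
    {ψ : AddMonoid.End M} (hψ : ∀ x, ∃ y, ψ x = p • y) (j : ℕ) (z : M) :
    ∃ y, ψ^[j] z = p ^ j • y := by
  induction j with
  | zero => exact ⟨z, by simp⟩
  | succ j ih =>
    obtain ⟨y, hy⟩ := ih
    obtain ⟨w, hw⟩ := hψ y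
    exact ⟨w, by rw [Function.iterate_succ_apply', hy, map_nsmul, hw, pow_succ', mul_nsmul]⟩

theorem exists_coprime_nsmul_ordProj_nsmul_eq_zero {M : Type*} [AddMonoid M] {p e : ℕ}
    (hp : p.Prime) (he : e ≠ 0) {y : M} (hy : e • y = 0) :
    ∃ n, 1 ≤ n ∧ n.Coprime p ∧ n • (ordProj[p] e • y) = 0 :=
  ⟨ordCompl[p] e, Nat.ordCompl_pos p he, (Nat.coprime_ordCompl hp he).symm, by
    rw [← mul_nsmul, Nat.ordProj_mul_ordCompl_eq_self, hy]⟩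

theorem Submodule.mem_torsion_int_iff {G : Type*} [AddCommGroup G] {x : G} :
    x ∈ torsion ℤ G ↔ IsOfFinAddOrder x :=
  SetLike.ext_iff.mp torsion_int x

namespace AddCommGroup

variable {G : Type*} [AddCommGroup G] [AddGroup.FG G]

instance finite_torsion : Finite (torsion G) :=
  Submodule.torsion_int (G := G) ▸
    (Module.finite_of_fg_torsion _ Submodule.torsion_isTorsion : Finite (Submodule.torsion ℤ G))

theorem isOfFinAddOrder_of_forall_exists_eq_pow_nsmul {p : ℕ} (hp : p ≠ 1) {x : G}
    (hx : ∀ j : ℕ, ∃ y, x = p ^ j • y) : IsOfFinAddOrder x := by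
  rw [← Submodule.mem_torsion_int_iff, ← Submodule.Quotient.mk_eq_zero]
  refine Module.eq_zero_of_forall_exists_eq_pow_smul (r := (p : ℤ)) ?_ fun j ↦ ?_
  · rwa [Int.isUnit_iff_natAbs_eq, Int.natAbs_natCast]
  · obtain ⟨y, rfl⟩ := hx j
    exact ⟨Submodule.Quotient.mk y, by
      rw [← Submodule.Quotient.mk_smul, ← Nat.cast_pow, natCast_zsmul]⟩

theorem exists_coprime_nsmul_eq_zero_of_forall_exists_eq_pow_nsmul {p : ℕ} (hp : p.Prime)
    {x : G} (hx : ∀ j : ℕ, ∃ y, x = p ^ j • y) : ∃ n, 1 ≤ n ∧ n.Coprime p ∧ n • x = 0 := by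
  set e := AddMonoid.exponent (torsion G)
  obtain ⟨y, rfl⟩ := hx (e.factorization p)
  have hy : IsOfFinAddOrder y :=
    (isOfFinAddOrder_of_forall_exists_eq_pow_nsmul hp.ne_one hx).of_nsmul
      (pow_ne_zero _ hp.ne_zero)
  exact exists_coprime_nsmul_ordProj_nsmul_eq_zero hp AddMonoid.exponent_ne_zero_of_finite
    (AddSubgroup.nsmul_exponent_eq_zero hy)

end AddCommGroup

theorem finite_and_coprime_order_of_iInter_general {G : Type*} [AddCommGroup G]
    [AddGroup.FG G] (p : ℕ) (hp : p.Prime)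
    (ψ : AddMonoid.End G)
    (hdvd : ∀ x : G, ∃ y : G, ψ x = p • y) :
    (⋂ j : ℕ, Set.range ((⇑ψ)^[j])).Finite ∧
    ∀ x ∈ ⋂ j : ℕ, Set.range ((⇑ψ)^[j]),
      ∃ n : ℕ, 1 ≤ n ∧ Nat.Coprime n p ∧ n • x = 0 := by
  have hdiv : ∀ x ∈ ⋂ j : ℕ, Set.range ((⇑ψ)^[j]), ∀ j : ℕ, ∃ y, x = p ^ j • y := by
    intro x hx j
    obtain ⟨z, rfl⟩ := Set.mem_iInter.mp hx j
    exact ψ.exists_iterate_eq_pow_nsmul hdvd j z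
  have htors : ⋂ j : ℕ, Set.range ((⇑ψ)^[j]) ⊆ AddCommGroup.torsion G := fun x hx ↦
    AddCommGroup.isOfFinAddOrder_of_forall_exists_eq_pow_nsmul hp.ne_one (hdiv x hx)
  exact ⟨(Set.finite_coe_iff.mp AddCommGroup.finite_torsion).subset htors, fun x hx ↦
    AddCommGroup.exists_coprime_nsmul_eq_zero_of_forall_exists_eq_pow_nsmul hp (hdiv x hx)⟩

/-- If `ψ` is an injective endomorphism of a finitely generated abelian group
`G` with `ψ(G) ⊆ p·G`, then `I = ⋂ j, ψ^j(G)` is finite and every element of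
`I` has (finite) order prime to `p`. -/
theorem finite_and_coprime_order_of_iInter {G : Type*} [AddCommGroup G]
    [AddGroup.FG G] (p : ℕ) (hp : p.Prime)
    (ψ : AddMonoid.End G) (hψ : Function.Injective ψ)
    (hdvd : ∀ x : G, ∃ y : G, ψ x = p • y) :
    (⋂ j : ℕ, Set.range ((⇑ψ)^[j])).Finite ∧
    ∀ x ∈ ⋂ j : ℕ, Set.range ((⇑ψ)^[j]),
      ∃ n : ℕ, 1 ≤ n ∧ Nat.Coprime n p ∧ n • x = 0 :=
  finite_and_coprime_order_of_iInter_general p hp ψ hdvd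
end
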